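/- Let f : ℝ → ℝ be a convex differentiable function on an interval J, let A₁,…,Aₙ be self-adjoint operators with spectra in J, and Φ₁,…,Φₙ : B(H) → B(K) positive linear maps with ∑ᵢ Φᵢ(1_H) = 1_K. Write S = ∑ᵢ Φᵢ(Aᵢ) and define ζ = sup over unit vectors x ∈ K of (⟨f'(S)·S x, x⟩ − ⟨S x, x⟩·⟨f'(S) x, x⟩). Then f(S) ≤ ∑ᵢ Φᵢ(f(Aᵢ)) + ζ·1_K. -/

import Mathlib

/-!
Fix a unit vector `x` and put `s = ⟨S x, x⟩`, which lies in `J` because `m ≤ S ≤ M` for some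
`m, M ∈ J`. Convexity gives the two tangent-line inequalities on `J`,
`f t ≤ f s + f' t * (t - s)` and `f s + f' s * (t - s) ≤ f t`. Through the functional calculus
the first yields `f(S) ≤ f(s) + f'(S) S - s f'(S)`; the second, applied to each `Aᵢ` and pushed
through the unital positive maps `Φᵢ`, yields `f(s) + f'(s) (S - s) ≤ ∑ᵢ Φᵢ(f(Aᵢ))`. Evaluated at
`x` the latter reads `f(s) ≤ ⟨∑ᵢ Φᵢ(f(Aᵢ)) x, x⟩`, while the former bounds `⟨f(S) x, x⟩` by
`f(s)` plus the quantity whose supremum is `ζ`.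
-/

open scoped InnerProductSpace

theorem ConvexOn.add_mul_sub_le_of_hasDerivAt {f : ℝ → ℝ} {J : Set ℝ} (hf : ConvexOn ℝ J f)
    {s t d : ℝ} (hs : s ∈ J) (ht : t ∈ J) (hd : HasDerivAt f d t) :
    f t + d * (s - t) ≤ f s := by
  rcases lt_trichotomy s t with hst | rfl | hts
  · have h := hf.slope_le_of_hasDerivAt hs ht hst hd
    rw [slope_def_field, div_le_iff₀ (by linarith)] at h
    linarith
  · simp
  · have h := hf.le_slope_of_hasDerivAt ht hs hts hd
    rw [slope_def_field, le_div_iff₀ (by linarith)] at h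
    linarith

section CFC

variable {A : Type*} [CStarAlgebra A] [PartialOrder A] [StarOrderedRing A]

theorem exists_algebraMap_le_and_le_algebraMap [Nontrivial A] {ι : Type*} [Finite ι]
    [Nonempty ι] {a : ι → A} (ha : ∀ i, IsSelfAdjoint (a i)) {J : Set ℝ}
    (hspec : ∀ i, spectrum ℝ (a i) ⊆ J) :
    ∃ m ∈ J, ∃ M ∈ J, ∀ i, algebraMap ℝ A m ≤ a i ∧ a i ≤ algebraMap ℝ A M := by
  obtain ⟨i₀, hi₀⟩ := Finite.exists_min fun i ↦ sInf (spectrum ℝ (a i))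
  obtain ⟨i₁, hi₁⟩ := Finite.exists_max fun i ↦ sSup (spectrum ℝ (a i))
  have hcpt (i : ι) : IsCompact (spectrum ℝ (a i)) := spectrum.isCompact (a i)
  have hne (i : ι) : (spectrum ℝ (a i)).Nonempty :=
    ContinuousFunctionalCalculus.spectrum_nonempty (a i) (ha i)
  refine ⟨_, hspec i₀ ((hcpt i₀).sInf_mem (hne i₀)), _, hspec i₁ ((hcpt i₁).sSup_mem (hne i₁)),
    fun i ↦ ⟨?_, ?_⟩⟩
  · exact algebraMap_le_of_le_spectrum (fun t ht ↦ (hi₀ i).trans (csInf_le (hcpt i).bddBelow ht))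
      (ha i)
  · exact le_algebraMap_of_spectrum_le (fun t ht ↦ (le_csSup (hcpt i).bddAbove ht).trans (hi₁ i))
      (ha i)

variable {f f' : ℝ → ℝ} {J : Set ℝ} {a : A}

theorem algebraMap_add_smul_sub_le_cfc (hf : ConvexOn ℝ J f)
    (hf' : ∀ t ∈ J, HasDerivAt f (f' t) t) (ha : IsSelfAdjoint a) (hspec : spectrum ℝ a ⊆ J)
    {s : ℝ} (hs : s ∈ J) :
    algebraMap ℝ A (f s) + f' s • (a - algebraMap ℝ A s) ≤ cfc f a := by
  have hfc : ContinuousOn f (spectrum ℝ a) := fun t ht ↦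
    (hf' t (hspec ht)).continuousAt.continuousWithinAt
  have h : cfc (fun t ↦ f s + f' s * (t - s)) a ≤ cfc f a :=
    cfc_mono fun t ht ↦ hf.add_mul_sub_le_of_hasDerivAt (hspec ht) hs (hf' s hs)
  rwa [cfc_const_add _ _ a, cfc_const_mul _ _ a, cfc_sub _ _ a, cfc_id' ℝ a, cfc_const s a] at h

theorem cfc_le_algebraMap_add_cfc_mul_sub (hf : ConvexOn ℝ J f)
    (hf' : ∀ t ∈ J, HasDerivAt f (f' t) t) (hf'c : ContinuousOn f' J) (ha : IsSelfAdjoint a)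
    (hspec : spectrum ℝ a ⊆ J) {s : ℝ} (hs : s ∈ J) :
    cfc f a ≤ algebraMap ℝ A (f s) + (cfc f' a * a - s • cfc f' a) := by
  have hfc : ContinuousOn f (spectrum ℝ a) := fun t ht ↦
    (hf' t (hspec ht)).continuousAt.continuousWithinAt
  have hf'c : ContinuousOn f' (spectrum ℝ a) := hf'c.mono hspec
  have h : cfc f a ≤ cfc (fun t ↦ f s + (f' t * t - s * f' t)) a := by
    refine cfc_mono fun t ht ↦ ?_
    have := hf.add_mul_sub_le_of_hasDerivAt hs (hspec ht) (hf' t (hspec ht))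
    linarith
  rwa [cfc_const_add _ _ a, cfc_sub _ _ a, cfc_mul _ _ a, cfc_id' ℝ a, cfc_const_mul _ _ a] at h

end CFC

theorem nonempty_and_nontrivial_of_sum_apply_one {R A B ι : Type*} [Semiring R] [Semiring A]
    [Semiring B] [Module R A] [Module R B] [Nontrivial B] [Fintype ι] {Φ : ι → A →ₗ[R] B}
    (hΦ : ∑ i, Φ i 1 = 1) : Nonempty ι ∧ Nontrivial A := by
  by_contra h
  rw [not_and_or, not_nonempty_iff, not_nontrivial_iff_subsingleton] at h
  have hzero : ∑ i, Φ i 1 = 0 := by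
    rcases h with h | h
    · simp
    · simp [Subsingleton.elim (1 : A) 0]
  exact one_ne_zero (hΦ.symm.trans hzero)

section PositiveLinearMap

variable {A B ι : Type*} [CStarAlgebra A] [PartialOrder A] [CStarAlgebra B] [PartialOrder B]
  [Fintype ι] {Φ : ι → A →ₚ[ℂ] B}

theorem PositiveLinearMap.sum_apply_algebraMap (hΦ : ∑ i, Φ i 1 = 1) (r : ℝ) :
    ∑ i, Φ i (algebraMap ℝ A r) = algebraMap ℝ B r := by
  simp only [Algebra.algebraMap_eq_smul_one, map_smul_of_tower, ← Finset.smul_sum, hΦ]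

theorem PositiveLinearMap.spectrum_sum_apply_subset [StarOrderedRing A] [StarOrderedRing B]
    (hΦ : ∑ i, Φ i 1 = 1) {a : ι → A} (ha : ∀ i, IsSelfAdjoint (a i)) {J : Set ℝ}
    (hJ : J.OrdConnected) (hspec : ∀ i, spectrum ℝ (a i) ⊆ J) :
    spectrum ℝ (∑ i, Φ i (a i)) ⊆ J := by
  rcases subsingleton_or_nontrivial B with hB | hB
  · simp [spectrum.of_subsingleton]
  obtain ⟨hι, hAnt⟩ := nonempty_and_nontrivial_of_sum_apply_one (Φ := fun i ↦ (Φ i).toLinearMap) hΦ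
  obtain ⟨m, hm, M, hM, hbounds⟩ := exists_algebraMap_le_and_le_algebraMap ha hspec
  have hsa : IsSelfAdjoint (∑ i, Φ i (a i)) := isSelfAdjoint_sum _ fun i _ ↦ (ha i).map' (Φ i)
  have hmle : algebraMap ℝ B m ≤ ∑ i, Φ i (a i) := by
    rw [← sum_apply_algebraMap hΦ]
    gcongr with i
    exact (hbounds i).1
  have hleM : ∑ i, Φ i (a i) ≤ algebraMap ℝ B M := by
    rw [← sum_apply_algebraMap hΦ]
    gcongr with i
    exact (hbounds i).2
  exact fun t ht ↦ hJ.out hm hM ⟨(algebraMap_le_iff_le_spectrum hsa).1 hmle t ht,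
    (le_algebraMap_iff_spectrum_le hsa).1 hleM t ht⟩

theorem PositiveLinearMap.algebraMap_add_smul_sub_le_sum_apply_cfc [StarOrderedRing A]
    [StarOrderedRing B] (hΦ : ∑ i, Φ i 1 = 1)
    {f f' : ℝ → ℝ} {J : Set ℝ} (hf : ConvexOn ℝ J f) (hf' : ∀ t ∈ J, HasDerivAt f (f' t) t)
    {a : ι → A} (ha : ∀ i, IsSelfAdjoint (a i)) (hspec : ∀ i, spectrum ℝ (a i) ⊆ J)
    {s : ℝ} (hs : s ∈ J) :
    algebraMap ℝ B (f s) + f' s • (∑ i, Φ i (a i) - algebraMap ℝ B s)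
      ≤ ∑ i, Φ i (cfc f (a i)) :=
  calc _ = ∑ i, Φ i (algebraMap ℝ A (f s) + f' s • (a i - algebraMap ℝ A s)) := by
        simp only [map_add, map_smul_of_tower, map_sub, Finset.sum_add_distrib, ← Finset.smul_sum,
          Finset.sum_sub_distrib, sum_apply_algebraMap hΦ]
    _ ≤ _ := by
        gcongr with i
        exact algebraMap_add_smul_sub_le_cfc hf hf' (ha i) (hspec i) hs

end PositiveLinearMap

section VectorFunctional

variable {K : Type*} [NormedAddCommGroup K] [InnerProductSpace ℂ K] [CompleteSpace K]

noncomputable def vectorFunctional (x : K) : (K →L[ℂ] K) →ₚ[ℝ] ℝ :=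
  .mk₀
    { toFun T := RCLike.re ⟪T x, x⟫_ℂ
      map_add' T U := by simp
      map_smul' r T := by simp [inner_smul_left_eq_smul] }
    fun T hT ↦ ((T.nonneg_iff_isPositive).1 hT).re_inner_nonneg_left x

@[simp]
theorem vectorFunctional_apply (x : K) (T : K →L[ℂ] K) :
    vectorFunctional x T = RCLike.re ⟪T x, x⟫_ℂ :=
  rfl

variable {x : K}

theorem vectorFunctional_algebraMap (hx : ‖x‖ = 1) (r : ℝ) :
    vectorFunctional x (algebraMap ℝ (K →L[ℂ] K) r) = r := by
  simp [Algebra.algebraMap_eq_smul_one, inner_self_eq_norm_sq_to_K, hx]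

theorem abs_vectorFunctional_le (hx : ‖x‖ = 1) (T : K →L[ℂ] K) :
    |vectorFunctional x T| ≤ ‖T‖ := by
  simpa [ContinuousLinearMap.rayleighQuotient, ContinuousLinearMap.reApplyInnerSelf_apply, hx]
    using T.rayleighQuotient_le_norm x

theorem bddAbove_range_vectorFunctional_sub_mul (T U V : K →L[ℂ] K) :
    BddAbove (Set.range fun x : {x : K // ‖x‖ = 1} ↦
      vectorFunctional (x : K) T - vectorFunctional (x : K) U * vectorFunctional (x : K) V) := by
  refine ⟨‖T‖ + ‖U‖ * ‖V‖, ?_⟩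
  rintro _ ⟨⟨x, hx⟩, rfl⟩
  have hT := abs_le.1 (abs_vectorFunctional_le hx T)
  have hUV : |vectorFunctional x U * vectorFunctional x V| ≤ ‖U‖ * ‖V‖ := by
    rw [abs_mul]
    exact mul_le_mul (abs_vectorFunctional_le hx U) (abs_vectorFunctional_le hx V) (abs_nonneg _)
      (norm_nonneg U)
  linarith [neg_abs_le (vectorFunctional x U * vectorFunctional x V)]

theorem vectorFunctional_mem_of_spectrum_subset {T : K →L[ℂ] K} (hT : IsSelfAdjoint T)
    {J : Set ℝ} (hJ : J.OrdConnected) (hspec : spectrum ℝ T ⊆ J) (hx : ‖x‖ = 1) :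
    vectorFunctional x T ∈ J := by
  have : Nontrivial K := ⟨⟨x, 0, fun h ↦ by simp [h] at hx⟩⟩
  obtain ⟨m, hm, M, hM, hbounds⟩ :=
    exists_algebraMap_le_and_le_algebraMap (a := fun _ : Unit ↦ T) (fun _ ↦ hT) (fun _ ↦ hspec)
  refine hJ.out hm hM ⟨?_, ?_⟩
  · exact (vectorFunctional_algebraMap hx m).symm.trans_le (OrderHomClass.mono _ (hbounds ()).1)
  · exact (OrderHomClass.mono _ (hbounds ()).2).trans_eq (vectorFunctional_algebraMap hx M)

theorem vectorFunctional_cfc_le_of_forall_tangent_le {f f' : ℝ → ℝ} {J : Set ℝ}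
    (hf : ConvexOn ℝ J f) (hf' : ∀ t ∈ J, HasDerivAt f (f' t) t) (hf'c : ContinuousOn f' J)
    {S G : K →L[ℂ] K} (hS : IsSelfAdjoint S) (hspec : spectrum ℝ S ⊆ J)
    (hG : ∀ s ∈ J, algebraMap ℝ _ (f s) + f' s • (S - algebraMap ℝ _ s) ≤ G) (hx : ‖x‖ = 1) :
    vectorFunctional x (cfc f S) ≤ vectorFunctional x G + (vectorFunctional x (cfc f' S * S)
      - vectorFunctional x S * vectorFunctional x (cfc f' S)) := by
  set ω := vectorFunctional x
  have hω (r : ℝ) : ω (algebraMap ℝ _ r) = r := vectorFunctional_algebraMap hx r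
  have hs : ω S ∈ J := vectorFunctional_mem_of_spectrum_subset hS hf.1.ordConnected hspec hx
  have hupper := OrderHomClass.mono ω (cfc_le_algebraMap_add_cfc_mul_sub hf hf' hf'c hS hspec hs)
  have hlower := OrderHomClass.mono ω (hG _ hs)
  simp only [map_add, map_sub, map_smul, hω, smul_eq_mul, sub_self] at hupper hlower
  linarith

theorem le_of_forall_vectorFunctional_le {T U : K →L[ℂ] K}
    (hT : IsSelfAdjoint T) (hU : IsSelfAdjoint U)
    (h : ∀ x : K, ‖x‖ = 1 → vectorFunctional x T ≤ vectorFunctional x U) : T ≤ U := by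
  refine (ContinuousLinearMap.le_def T U).2 (ContinuousLinearMap.isPositive_def'.2
    ⟨hU.sub hT, fun y ↦ ?_⟩)
  rcases eq_or_ne y 0 with rfl | hy
  · simp [ContinuousLinearMap.reApplyInnerSelf_apply]
  have hy' : ‖y‖ ≠ 0 := norm_ne_zero_iff.2 hy
  set u : K := (‖y‖⁻¹ : ℂ) • y
  have hu : ‖u‖ = 1 := by simp [u, norm_smul, hy']
  have hyu : y = (‖y‖ : ℂ) • u := by simp [u, smul_smul, hy']
  have hu_nonneg : 0 ≤ vectorFunctional u (U - T) := by
    rw [map_sub]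
    exact sub_nonneg.2 (h u hu)
  rw [hyu, ContinuousLinearMap.reApplyInnerSelf_smul]
  exact mul_nonneg (sq_nonneg _) hu_nonneg

end VectorFunctional

/-- Operator Jensen-type inequality without operator convexity. -/
theorem operator_jensen_without_operator_convexity {H K : Type*}
    [NormedAddCommGroup H] [InnerProductSpace ℂ H] [CompleteSpace H]
    [NormedAddCommGroup K] [InnerProductSpace ℂ K] [CompleteSpace K]
    (f f' : ℝ → ℝ) (J : Set ℝ) (hf : ConvexOn ℝ J f)
    (hf' : ∀ t ∈ J, HasDerivAt f (f' t) t) (hf'c : ContinuousOn f' J)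
    (n : ℕ) (A : Fin n → H →L[ℂ] H)
    (Φ : Fin n → (H →L[ℂ] H) →ₗ[ℂ] (K →L[ℂ] K))
    (hA : ∀ i, IsSelfAdjoint (A i)) (hspec : ∀ i, spectrum ℝ (A i) ⊆ J)
    (hΦpos : ∀ i, ∀ T : H →L[ℂ] H, T.IsPositive → (Φ i T).IsPositive)
    (hunital : ∑ i, Φ i 1 = 1)
    (S : K →L[ℂ] K) (hS : S = ∑ i, Φ i (A i))
    (ζ : ℝ)
    (hζ : ζ = ⨆ x : {x : K // ‖x‖ = 1},
      (RCLike.re ⟪(cfc f' S * S) (x : K), (x : K)⟫_ℂ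
        - RCLike.re ⟪S (x : K), (x : K)⟫_ℂ
          * RCLike.re ⟪cfc f' S (x : K), (x : K)⟫_ℂ)) :
    cfc f S ≤ ∑ i, Φ i (cfc f (A i)) + ζ • (1 : K →L[ℂ] K) := by
  obtain ⟨Ψ, hΨ⟩ : ∃ Ψ : Fin n → (H →L[ℂ] H) →ₚ[ℂ] (K →L[ℂ] K), ∀ i T, Ψ i T = Φ i T :=
    ⟨fun i ↦ .mk₀ (Φ i) fun T hT ↦
      (Φ i T).nonneg_iff_isPositive.2 (hΦpos i T (T.nonneg_iff_isPositive.1 hT)), fun _ _ ↦ rfl⟩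
  simp only [← hΨ] at hunital hS ⊢
  have hSsa : IsSelfAdjoint S := hS ▸ isSelfAdjoint_sum _ fun i _ ↦ (hA i).map' (Ψ i)
  have hSJ : spectrum ℝ S ⊆ J :=
    hS ▸ PositiveLinearMap.spectrum_sum_apply_subset hunital hA hf.1.ordConnected hspec
  have hGsa : IsSelfAdjoint (∑ i, Ψ i (cfc f (A i))) :=
    isSelfAdjoint_sum _ fun i _ ↦ (cfc_predicate f (A i)).map' (Ψ i)
  refine le_of_forall_vectorFunctional_le (cfc_predicate f S)
    (hGsa.add ((IsSelfAdjoint.all ζ).smul (.one _))) fun x hx ↦ ?_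
  have hJensen := vectorFunctional_cfc_le_of_forall_tangent_le hf hf' hf'c hSsa hSJ
    (fun s hs ↦ hS ▸ PositiveLinearMap.algebraMap_add_smul_sub_le_sum_apply_cfc hunital hf hf' hA
      hspec hs) hx
  have hζx : vectorFunctional x (cfc f' S * S)
      - vectorFunctional x S * vectorFunctional x (cfc f' S) ≤ ζ :=
    hζ ▸ le_ciSup (bddAbove_range_vectorFunctional_sub_mul _ _ _) ⟨x, hx⟩
  rw [map_add, ← Algebra.algebraMap_eq_smul_one, vectorFunctional_algebraMap hx]
  linarith
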